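/- arXiv:1807.03571 — 4 statements merged into one kernel-verified Lean document; each statement's English description precedes it below -/
import Mathlib

section
/- (Safety ball around a point with positive margin; core of the misclassification-aggregator lemma.) Suppose class c is top at x, i.e., f c x ≥ f c' x for all classes c'. Then for every y ∈ E with M(c) · dist(x,y) ≤ g(x,c), class c is still top at y, i.e., f c y ≥ f c' y for all classes c'. In particular no class change can occur within distance g(x,c)/M(c) of x. -/
/-- The minimum confidence margin of class `c` at `x`:
`g(x,c) = min_{c' ≠ c} (f c x − f c' x)`. -/
noncomputable def margin {E : Type*} {C : Type*} [Fintype C] [DecidableEq C] [Nontrivial C]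
    (f : C → E → ℝ) (c : C) (x : E) : ℝ :=
  (Finset.univ.erase c).inf'
    (by obtain ⟨b, hb⟩ := exists_ne c
        exact ⟨b, Finset.mem_erase.2 ⟨hb, Finset.mem_univ b⟩⟩)
    (fun c' => f c x - f c' x)

/-- `M(c) = max_{c' ≠ c} (K c + K c')`. -/
noncomputable def Mconst {C : Type*} [Fintype C] [DecidableEq C] [Nontrivial C]
    (K : C → ℝ) (c : C) : ℝ :=
  (Finset.univ.erase c).sup'
    (by obtain ⟨b, hb⟩ := exists_ne c
        exact ⟨b, Finset.mem_erase.2 ⟨hb, Finset.mem_univ b⟩⟩)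
    (fun c' => K c + K c')

/-!
Moving from `x` to `y` changes the gap `f c - f c'` by at most
`(K c + K c') * dist x y ≤ M(c) * dist x y ≤ g(x,c) ≤ f c x - f c' x`,
so the gap stays nonnegative.
-/

section Margin

variable {E C : Type*} [Fintype C] [DecidableEq C] [Nontrivial C]

theorem margin_le_sub (f : C → E → ℝ) {c c' : C} (h : c' ≠ c) (x : E) :
    margin f c x ≤ f c x - f c' x :=
  Finset.inf'_le _ (Finset.mem_erase.2 ⟨h, Finset.mem_univ c'⟩)

theorem add_le_Mconst (K : C → ℝ) {c c' : C} (h : c' ≠ c) : K c + K c' ≤ Mconst K c :=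
  Finset.le_sup' (fun c'' => K c + K c'') (Finset.mem_erase.2 ⟨h, Finset.mem_univ c'⟩)

end Margin

theorem sub_sub_mul_dist_le_sub {E : Type*} [PseudoMetricSpace E] {u v : E → ℝ} {Ku Kv : ℝ}
    {x y : E} (hu : |u x - u y| ≤ Ku * dist x y) (hv : |v x - v y| ≤ Kv * dist x y) :
    u x - v x - (Ku + Kv) * dist x y ≤ u y - v y := by
  have hu' := abs_le.1 hu
  have hv' := abs_le.1 hv
  linarith [hu'.2, hv'.1]

theorem top_class_stable_within_margin_ball_general
    {E : Type*} [MetricSpace E] {C : Type*} [Fintype C] [DecidableEq C] [Nontrivial C]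
    (f : C → E → ℝ) (K : C → ℝ)
    (hf : ∀ c x y, |f c x - f c y| ≤ K c * dist x y)
    (c : C) (x : E)
    (y : E) (hy : Mconst K c * dist x y ≤ margin f c x) :
    ∀ c', f c y ≥ f c' y := by
  intro c'
  rcases eq_or_ne c' c with rfl | hne
  · exact le_rfl
  have hgap := sub_sub_mul_dist_le_sub (hf c x y) (hf c' x y)
  have hK : (K c + K c') * dist x y ≤ Mconst K c * dist x y :=
    mul_le_mul_of_nonneg_right (add_le_Mconst K hne) dist_nonneg
  linarith [margin_le_sub f hne x]

/-- **Safety ball around a point with positive margin.** If class `c` is top at `x`,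
then for every `y` with `M(c) · dist(x,y) ≤ g(x,c)`, class `c` is still top at `y`;
in particular no class change can occur within distance `g(x,c)/M(c)` of `x`. -/
theorem top_class_stable_within_margin_ball
    {E : Type*} [MetricSpace E] {C : Type*} [Fintype C] [DecidableEq C] [Nontrivial C]
    (f : C → E → ℝ) (K : C → ℝ)
    (hf : ∀ c x y, |f c x - f c y| ≤ K c * dist x y)
    (c : C) (x : E)
    (htop : ∀ c', f c x ≥ f c' x)
    (y : E) (hy : Mconst K c * dist x y ≤ margin f c x) :
    ∀ c', f c y ≥ f c' y :=
  top_class_stable_within_margin_ball_general f K hf c x y hy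
end

section
/- (All τ-grid points are misclassification aggregators under the Lipschitz margin condition.) Let α ∈ E, τ > 0, and set δ = (n·τ^p)^{1/p}. Suppose that for every τ-grid point x' with respect to α there is a class c_{x'} that is top at x' (f c_{x'} x' ≥ f c x' for all c) and such that δ ≤ 2·g(x', c_{x'}) / M(c_{x'}). Then for every τ-grid point x', for every x with ‖x − x'‖_p ≤ δ/2, class c_{x'} is top at x (f c_{x'} x ≥ f c x for all c); consequently, if some class c is strictly classified at x (g(x,c) > 0), then c = c_{x'}. -/
/-! For `c' ≠ c`, moving from `x'` to `x` changes `f c - f c'` by at most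
`(K c + K c') · dist x x' ≤ M(c) · δ/2 ≤ g(x', c)`, so `c = c_{x'}` stays on top at `x`.
A class with positive margin at `x` strictly beats every other class, hence is `c_{x'}`. -/

/-- `x` is a τ-grid point with respect to `α`: every coordinate of `x` differs
from the corresponding coordinate of `α` by a natural multiple of `τ`. -/
def IsGridPoint {n : ℕ} {q : ENNReal} (τ : ℝ)
    (α x : PiLp q (fun _ : Fin n => ℝ)) : Prop :=
  ∀ i, ∃ m : ℕ, |x i - α i| = m * τ

section Margin

variable {E C : Type*} [Fintype C] [DecidableEq C] [Nontrivial C]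

theorem Mconst_pos {K : C → ℝ} (hK : ∀ c, 0 < K c) (c : C) : 0 < Mconst K c := by
  obtain ⟨c', hc'⟩ := exists_ne c
  exact (add_pos (hK c) (hK c')).trans_le (add_le_Mconst K hc')

theorem eq_of_forall_le_of_margin_pos (f : C → E → ℝ) {c c' : C} {x : E}
    (htop : ∀ c'', f c'' x ≤ f c x) (hpos : 0 < margin f c' x) : c' = c := by
  by_contra hne
  linarith [margin_le_sub f (Ne.symm hne) x, htop c']

end Margin

theorem le_of_lipschitz_mul_dist_le_sub {E : Type*} [PseudoMetricSpace E] {u v : E → ℝ}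
    {Ku Kv : ℝ} (hu : ∀ x y, |u x - u y| ≤ Ku * dist x y)
    (hv : ∀ x y, |v x - v y| ≤ Kv * dist x y) {x y : E}
    (hgap : (Ku + Kv) * dist x y ≤ u y - v y) : v x ≤ u x := by
  linarith [(abs_le.mp (hu x y)).1, (abs_le.mp (hv x y)).2]

theorem le_of_Mconst_mul_dist_le_margin {E C : Type*} [PseudoMetricSpace E] [Fintype C]
    [DecidableEq C] [Nontrivial C] {f : C → E → ℝ} {K : C → ℝ}
    (hf : ∀ c x y, |f c x - f c y| ≤ K c * dist x y) {c : C} {x x' : E}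
    (h : Mconst K c * dist x x' ≤ margin f c x') (c' : C) : f c' x ≤ f c x := by
  rcases eq_or_ne c' c with rfl | hne
  · exact le_rfl
  · refine le_of_lipschitz_mul_dist_le_sub (y := x') (hf c) (hf c') ?_
    calc (K c + K c') * dist x x' ≤ Mconst K c * dist x x' :=
          mul_le_mul_of_nonneg_right (add_le_Mconst K hne) dist_nonneg
      _ ≤ margin f c x' := h
      _ ≤ f c x' - f c' x' := margin_le_sub f hne x'

theorem grid_points_are_misclassification_aggregators_general
    (n : ℕ) (p : ℝ) [Fact (1 ≤ ENNReal.ofReal p)]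
    {C : Type*} [Fintype C] [DecidableEq C] [Nontrivial C]
    (f : C → PiLp (ENNReal.ofReal p) (fun _ : Fin n => ℝ) → ℝ)
    (K : C → ℝ) (hK : ∀ c, 0 < K c)
    (hf : ∀ c x y, |f c x - f c y| ≤ K c * dist x y)
    (α : PiLp (ENNReal.ofReal p) (fun _ : Fin n => ℝ)) (τ : ℝ)
    (cstar : PiLp (ENNReal.ofReal p) (fun _ : Fin n => ℝ) → C)
    (hgrid : ∀ x', IsGridPoint τ α x' →
      (∀ c, f (cstar x') x' ≥ f c x') ∧
      ((n : ℝ) * τ ^ p) ^ (1 / p) ≤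
        2 * margin f (cstar x') x' / Mconst K (cstar x')) :
    ∀ x', IsGridPoint τ α x' →
      ∀ x, ‖x - x'‖ ≤ ((n : ℝ) * τ ^ p) ^ (1 / p) / 2 →
        (∀ c, f (cstar x') x ≥ f c x) ∧
        (∀ c, 0 < margin f c x → c = cstar x') := by
  intro x' hx' x hx
  obtain ⟨-, hδ⟩ := hgrid x' hx'
  have hM := Mconst_pos hK (cstar x')
  rw [le_div_iff₀ hM] at hδ
  have hclose : Mconst K (cstar x') * dist x x' ≤ margin f (cstar x') x' := by
    rw [dist_eq_norm]
    linarith [mul_le_mul_of_nonneg_left hx hM.le]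
  have htop := le_of_Mconst_mul_dist_le_margin hf hclose
  exact ⟨htop, fun c hc => eq_of_forall_le_of_margin_pos f htop hc⟩

/-- **All τ-grid points are misclassification aggregators** under the Lipschitz
margin condition `δ ≤ 2·g(x', c_{x'}) / M(c_{x'})`, where `δ = (n·τ^p)^{1/p}`. -/
theorem grid_points_are_misclassification_aggregators
    (n : ℕ) (hn : 1 ≤ n) (p : ℝ) (hp : 1 ≤ p) [Fact (1 ≤ ENNReal.ofReal p)]
    {C : Type*} [Fintype C] [DecidableEq C] [Nontrivial C]
    (f : C → PiLp (ENNReal.ofReal p) (fun _ : Fin n => ℝ) → ℝ)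
    (K : C → ℝ) (hK : ∀ c, 0 < K c)
    (hf : ∀ c x y, |f c x - f c y| ≤ K c * dist x y)
    (α : PiLp (ENNReal.ofReal p) (fun _ : Fin n => ℝ)) (τ : ℝ) (hτ : 0 < τ)
    (cstar : PiLp (ENNReal.ofReal p) (fun _ : Fin n => ℝ) → C)
    (hgrid : ∀ x', IsGridPoint τ α x' →
      (∀ c, f (cstar x') x' ≥ f c x') ∧
      ((n : ℝ) * τ ^ p) ^ (1 / p) ≤
        2 * margin f (cstar x') x' / Mconst K (cstar x')) :
    ∀ x', IsGridPoint τ α x' →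
      ∀ x, ‖x - x'‖ ≤ ((n : ℝ) * τ ^ p) ^ (1 / p) / 2 →
        (∀ c, f (cstar x') x ≥ f c x) ∧
        (∀ c, 0 < margin f c x → c = cstar x') :=
  grid_points_are_misclassification_aggregators_general n p f K hK hf α τ cstar hgrid
end

section
/- (Lower bound on the maximum safe radius via misclassification aggregators.) Let τ > 0 and set δ = (n·τ^p)^{1/p}. Assume (i) there exists at least one adversarial example, and (ii) every τ-grid point with respect to α is a misclassification aggregator with respect to δ/2. Then sInf { ‖y − α‖_p : y is a τ-grid point with respect to α and N y = c } ≤ sInf { ‖x − α‖_p : x is an adversarial example } + δ/2. (Equivalently, the maximum safe radius is at least the finite maximum safe radius minus δ/2.) -/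
/-!
Round every coordinate of an input `x` to the nearest point of the τ-grid around `α`. Each
coordinate moves by at most `τ/2`, so the rounded point `y` satisfies `‖x - y‖_p ≤ δ/2`.
If `x` is classified as `c`, the aggregator property at `y` then gives `N y = c`, and
`‖y - α‖_p ≤ ‖x - α‖_p + δ/2` by the triangle inequality. Taking infima gives the bound.
-/

theorem csInf_image_le_csInf_image_add {α β : Type*} {f : α → ℝ} {g : β → ℝ}
    {s : Set α} {t : Set β} (hs : s.Nonempty) (hg : BddBelow (g '' t)) {r : ℝ}
    (h : ∀ x ∈ s, ∃ y ∈ t, g y ≤ f x + r) :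
    sInf (g '' t) ≤ sInf (f '' s) + r := by
  rw [← sub_le_iff_le_add]
  refine le_csInf (hs.image f) ?_
  rintro _ ⟨x, hx, rfl⟩
  obtain ⟨y, hy, hyx⟩ := h x hx
  linarith [csInf_le hg (Set.mem_image_of_mem g hy)]

theorem PiLp.norm_le_of_forall_norm_le {ι : Type*} [Fintype ι] {β : ι → Type*}
    [∀ i, SeminormedAddCommGroup (β i)] {q : ENNReal} (hq : 0 < q.toReal) (v : PiLp q β)
    {r : ℝ} (h : ∀ i, ‖v i‖ ≤ r) :
    ‖v‖ ≤ (Fintype.card ι * r ^ q.toReal) ^ (1 / q.toReal) := by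
  rw [PiLp.norm_eq_sum hq]
  gcongr
  calc ∑ i, ‖v i‖ ^ q.toReal ≤ ∑ _i : ι, r ^ q.toReal := by gcongr with i; exact h i
    _ = Fintype.card ι * r ^ q.toReal := by simp

section GridRounding

variable {n : ℕ} {q : ENNReal} {τ : ℝ}

noncomputable def gridRound (τ : ℝ) (α x : PiLp q (fun _ : Fin n => ℝ)) :
    PiLp q (fun _ : Fin n => ℝ) :=
  WithLp.toLp q fun i => α i + round ((x i - α i) / τ) * τ

theorem isGridPoint_gridRound (hτ : 0 ≤ τ) (α x : PiLp q (fun _ : Fin n => ℝ)) :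
    IsGridPoint τ α (gridRound τ α x) := by
  intro i
  refine ⟨(round ((x i - α i) / τ)).natAbs, ?_⟩
  simp [gridRound, abs_mul, abs_of_nonneg hτ]

theorem abs_sub_gridRound_le (hτ : 0 < τ) (α x : PiLp q (fun _ : Fin n => ℝ)) (i : Fin n) :
    |x i - gridRound τ α x i| ≤ τ / 2 := by
  have hround := abs_sub_round ((x i - α i) / τ)
  calc |x i - gridRound τ α x i|
      = |((x i - α i) / τ - round ((x i - α i) / τ)) * τ| := by
        congr 1
        simp only [gridRound, sub_mul, div_mul_cancel₀ _ hτ.ne']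
        ring
    _ = |(x i - α i) / τ - round ((x i - α i) / τ)| * τ := by rw [abs_mul, abs_of_pos hτ]
    _ ≤ 1 / 2 * τ := by gcongr
    _ = τ / 2 := by ring

/-- Doubling `x - gridRound τ α x` puts every coordinate in `[-τ, τ]`. -/
theorem norm_sub_gridRound_le [Fact (1 ≤ q)] (hq : 0 < q.toReal) (hτ : 0 < τ)
    (α x : PiLp q (fun _ : Fin n => ℝ)) :
    ‖x - gridRound τ α x‖ ≤ ((n : ℝ) * τ ^ q.toReal) ^ (1 / q.toReal) / 2 := by
  have h := PiLp.norm_le_of_forall_norm_le hq ((2 : ℝ) • (x - gridRound τ α x))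
    fun i => by
      simpa [abs_mul, le_div_iff₀' (two_pos : (0 : ℝ) < 2)] using abs_sub_gridRound_le hτ α x i
  rw [norm_smul, Real.norm_two, Fintype.card_fin] at h
  linarith

end GridRounding

theorem fmsr_le_msr_add_half_delta_general
    (n : ℕ) (p : ℝ) (hp : 1 ≤ p) [Fact (1 ≤ ENNReal.ofReal p)]
    {C : Type*} (N : PiLp (ENNReal.ofReal p) (fun _ : Fin n => ℝ) → C)
    (α : PiLp (ENNReal.ofReal p) (fun _ : Fin n => ℝ))
    (c : C) (d : ℝ)
    (τ : ℝ) (hτ : 0 < τ)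
    (hadv : ∃ x : PiLp (ENNReal.ofReal p) (fun _ : Fin n => ℝ), ‖x - α‖ ≤ d ∧ N x = c)
    (haggr : ∀ y, IsGridPoint τ α y →
      ∀ x, ‖x - y‖ ≤ ((n : ℝ) * τ ^ p) ^ (1 / p) / 2 → N x = c → N y = c) :
    sInf ((fun y => ‖y - α‖) '' {y | IsGridPoint τ α y ∧ N y = c}) ≤
      sInf ((fun x => ‖x - α‖) '' {x | ‖x - α‖ ≤ d ∧ N x = c}) +
        ((n : ℝ) * τ ^ p) ^ (1 / p) / 2 := by
  have hpq : (ENNReal.ofReal p).toReal = p := ENNReal.toReal_ofReal (by linarith)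
  refine csInf_image_le_csInf_image_add hadv
    ⟨0, Set.forall_mem_image.2 fun _ _ => norm_nonneg _⟩ ?_
  rintro x ⟨-, hxc⟩
  have hxy : ‖x - gridRound τ α x‖ ≤ ((n : ℝ) * τ ^ p) ^ (1 / p) / 2 := by
    simpa only [hpq] using norm_sub_gridRound_le (by rw [hpq]; linarith) hτ α x
  have hgrid := isGridPoint_gridRound hτ.le α x
  refine ⟨gridRound τ α x, ⟨hgrid, haggr _ hgrid x hxy hxc⟩, ?_⟩
  calc ‖gridRound τ α x - α‖ ≤ ‖gridRound τ α x - x‖ + ‖x - α‖ :=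
        norm_sub_le_norm_sub_add_norm_sub _ _ _
    _ ≤ _ := by rw [norm_sub_rev]; linarith

/-- **Lower bound on the maximum safe radius via misclassification aggregators.**
If there is at least one adversarial example and every τ-grid point is a
misclassification aggregator with respect to `δ/2` (with `δ = (n·τ^p)^{1/p}`), then
the finite maximum safe radius is at most the maximum safe radius plus `δ/2`. -/
theorem fmsr_le_msr_add_half_delta
    (n : ℕ) (hn : 1 ≤ n) (p : ℝ) (hp : 1 ≤ p) [Fact (1 ≤ ENNReal.ofReal p)]
    {C : Type*} (N : PiLp (ENNReal.ofReal p) (fun _ : Fin n => ℝ) → C)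
    (α : PiLp (ENNReal.ofReal p) (fun _ : Fin n => ℝ))
    (c : C) (hc : c ≠ N α) (d : ℝ) (hd : 0 < d)
    (τ : ℝ) (hτ : 0 < τ)
    (hadv : ∃ x : PiLp (ENNReal.ofReal p) (fun _ : Fin n => ℝ), ‖x - α‖ ≤ d ∧ N x = c)
    (haggr : ∀ y, IsGridPoint τ α y →
      ∀ x, ‖x - y‖ ≤ ((n : ℝ) * τ ^ p) ^ (1 / p) / 2 → N x = c → N y = c) :
    sInf ((fun y => ‖y - α‖) '' {y | IsGridPoint τ α y ∧ N y = c}) ≤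
      sInf ((fun x => ‖x - α‖) '' {x | ‖x - α‖ ≤ d ∧ N x = c}) +
        ((n : ℝ) * τ ^ p) ^ (1 / p) / 2 :=
  fmsr_le_msr_add_half_delta_general n p hp N α c d τ hτ hadv haggr
end

section
/- (Feature-restricted lower bound via misclassification aggregators.) Let S ⊆ Fin n be a set of coordinates (a feature), let τ > 0, and set δ = (n·τ^p)^{1/p}. Assume (i) there exists an adversarial example x with x i = α i for every i ∉ S, and (ii) every τ-grid point with respect to α is a misclassification aggregator with respect to δ/2. Then sInf { ‖y − α‖_p : y is a τ-grid point with respect to α, N y = c, and y i = α i for every i ∉ S } ≤ sInf { ‖x − α‖_p : x is an adversarial example and x i = α i for every i ∉ S } + δ/2. -/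
open Finset

lemma csInf_image_le_csInf_image_add_s12 {α β : Type*} {f : α → ℝ} {g : β → ℝ} {A : Set α}
    {B : Set β} {ε : ℝ} (hA : A.Nonempty) (hg : BddBelow (g '' B))
    (h : ∀ a ∈ A, ∃ b ∈ B, g b ≤ f a + ε) :
    sInf (g '' B) ≤ sInf (f '' A) + ε := by
  rw [← sub_le_iff_le_add]
  refine le_csInf (hA.image f) ?_
  rintro _ ⟨a, ha, rfl⟩
  obtain ⟨b, hb, hle⟩ := h a ha
  exact sub_le_iff_le_add.mpr ((csInf_le hg ⟨b, hb, rfl⟩).trans hle)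

lemma abs_mul_round_div_sub_le {τ : ℝ} (hτ : 0 < τ) (t : ℝ) :
    |τ * round (t / τ) - t| ≤ τ / 2 := by
  have hshift : τ * round (t / τ) - t = τ * (round (t / τ) - t / τ) := by
    field_simp
  rw [hshift, abs_mul, abs_of_pos hτ, abs_sub_comm]
  linarith [mul_le_mul_of_nonneg_left (abs_sub_round (t / τ)) hτ.le]

lemma PiLp.norm_le_card_rpow_mul {ι : Type*} [Fintype ι] {β : ι → Type*}
    [∀ i, SeminormedAddCommGroup (β i)] {p : ENNReal} (hp : 0 < p.toReal) (x : PiLp p β)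
    {r : ℝ} (hr : 0 ≤ r) (hx : ∀ i, ‖x i‖ ≤ r) :
    ‖x‖ ≤ (Fintype.card ι : ℝ) ^ (1 / p.toReal) * r := by
  calc ‖x‖ = (∑ i, ‖x i‖ ^ p.toReal) ^ (1 / p.toReal) := PiLp.norm_eq_sum hp x
    _ ≤ (∑ _i : ι, r ^ p.toReal) ^ (1 / p.toReal) := by
      gcongr with i
      exact hx i
    _ = (Fintype.card ι : ℝ) ^ (1 / p.toReal) * r := by
      rw [sum_const, card_univ, nsmul_eq_mul, Real.mul_rpow (by positivity) (by positivity),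
        one_div, Real.rpow_rpow_inv hr hp.ne']

section roundToGrid

variable {n : ℕ} {q : ENNReal}

noncomputable def roundToGrid (τ : ℝ) (α x : PiLp q (fun _ : Fin n => ℝ)) :
    PiLp q (fun _ : Fin n => ℝ) :=
  WithLp.toLp q fun i => α i + τ * round ((x i - α i) / τ)

variable {τ : ℝ}

lemma roundToGrid_apply (α x : PiLp q (fun _ : Fin n => ℝ)) (i : Fin n) :
    roundToGrid τ α x i = α i + τ * round ((x i - α i) / τ) :=
  rfl

lemma isGridPoint_roundToGrid (hτ : 0 ≤ τ) (α x : PiLp q (fun _ : Fin n => ℝ)) :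
    IsGridPoint τ α (roundToGrid τ α x) := by
  intro i
  refine ⟨(round ((x i - α i) / τ)).natAbs, ?_⟩
  rw [roundToGrid_apply, add_sub_cancel_left, abs_mul, abs_of_nonneg hτ, Nat.cast_natAbs,
    Int.cast_abs, mul_comm]

lemma roundToGrid_apply_of_apply_eq {α x : PiLp q (fun _ : Fin n => ℝ)} {i : Fin n}
    (hi : x i = α i) : roundToGrid τ α x i = α i := by
  simp [roundToGrid_apply, hi]

lemma norm_roundToGrid_sub_le (hτ : 0 < τ) (hq : 0 < q.toReal)
    (α x : PiLp q (fun _ : Fin n => ℝ)) :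
    ‖roundToGrid τ α x - x‖ ≤ (n : ℝ) ^ (1 / q.toReal) * (τ / 2) := by
  simpa using PiLp.norm_le_card_rpow_mul hq (roundToGrid τ α x - x) (by positivity) fun i => by
    rw [PiLp.sub_apply, roundToGrid_apply, Real.norm_eq_abs]
    convert abs_mul_round_div_sub_le hτ (x i - α i) using 2
    ring

end roundToGrid

lemma rpow_mul_rpow_one_div_div_two {n τ p : ℝ} (hn : 0 ≤ n) (hτ : 0 ≤ τ) (hp : p ≠ 0) :
    (n * τ ^ p) ^ (1 / p) / 2 = n ^ (1 / p) * (τ / 2) := by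
  rw [Real.mul_rpow hn (by positivity), one_div, Real.rpow_rpow_inv hτ hp, mul_div_assoc]

theorem feature_restricted_fmsr_le_msr_add_half_delta_general
    (n : ℕ) (p : ℝ) [Fact (1 ≤ ENNReal.ofReal p)]
    {C : Type*} (N : PiLp (ENNReal.ofReal p) (fun _ : Fin n => ℝ) → C)
    (α : PiLp (ENNReal.ofReal p) (fun _ : Fin n => ℝ))
    (c : C) (d : ℝ)
    (S : Set (Fin n)) (τ : ℝ) (hτ : 0 < τ)
    (hadv : ∃ x : PiLp (ENNReal.ofReal p) (fun _ : Fin n => ℝ),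
      (‖x - α‖ ≤ d ∧ N x = c) ∧ ∀ i ∉ S, x i = α i)
    (haggr : ∀ y, IsGridPoint τ α y →
      ∀ x, ‖x - y‖ ≤ ((n : ℝ) * τ ^ p) ^ (1 / p) / 2 → N x = c → N y = c) :
    sInf ((fun y => ‖y - α‖) ''
        {y | IsGridPoint τ α y ∧ N y = c ∧ ∀ i ∉ S, y i = α i}) ≤
      sInf ((fun x => ‖x - α‖) ''
        {x | (‖x - α‖ ≤ d ∧ N x = c) ∧ ∀ i ∉ S, x i = α i}) +
        ((n : ℝ) * τ ^ p) ^ (1 / p) / 2 := by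
  have hp : 0 < p := one_pos.trans_le (ENNReal.one_le_ofReal.mp Fact.out)
  have hpReal : (ENNReal.ofReal p).toReal = p := ENNReal.toReal_ofReal hp.le
  refine csInf_image_le_csInf_image_add_s12 hadv ⟨0, ?_⟩ ?_
  · rintro _ ⟨y, -, rfl⟩
    exact norm_nonneg _
  rintro x ⟨⟨-, hNx⟩, hxS⟩
  set y := roundToGrid τ α x
  have hgrid : IsGridPoint τ α y := isGridPoint_roundToGrid hτ.le α x
  have hyx : ‖y - x‖ ≤ ((n : ℝ) * τ ^ p) ^ (1 / p) / 2 := by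
    have := norm_roundToGrid_sub_le hτ (by rwa [hpReal]) α x
    rwa [hpReal, ← rpow_mul_rpow_one_div_div_two n.cast_nonneg hτ.le hp.ne'] at this
  refine ⟨y, ⟨hgrid, haggr y hgrid x (norm_sub_rev x y ▸ hyx) hNx,
    fun i hi => roundToGrid_apply_of_apply_eq (hxS i hi)⟩, ?_⟩
  linarith [norm_sub_le_norm_sub_add_norm_sub y x α]

/-- **Feature-restricted lower bound via misclassification aggregators.**
If there is an adversarial example supported on the feature `S` and every τ-grid
point is a misclassification aggregator with respect to `δ/2`
(with `δ = (n·τ^p)^{1/p}`), then the infimum distance to a τ-grid point classified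
as `c` and supported on `S` is at most the infimum distance to an `S`-supported
adversarial example plus `δ/2`. -/
theorem feature_restricted_fmsr_le_msr_add_half_delta
    (n : ℕ) (hn : 1 ≤ n) (p : ℝ) (hp : 1 ≤ p) [Fact (1 ≤ ENNReal.ofReal p)]
    {C : Type*} (N : PiLp (ENNReal.ofReal p) (fun _ : Fin n => ℝ) → C)
    (α : PiLp (ENNReal.ofReal p) (fun _ : Fin n => ℝ))
    (c : C) (hc : c ≠ N α) (d : ℝ) (hd : 0 < d)
    (S : Set (Fin n)) (τ : ℝ) (hτ : 0 < τ)
    (hadv : ∃ x : PiLp (ENNReal.ofReal p) (fun _ : Fin n => ℝ),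
      (‖x - α‖ ≤ d ∧ N x = c) ∧ ∀ i ∉ S, x i = α i)
    (haggr : ∀ y, IsGridPoint τ α y →
      ∀ x, ‖x - y‖ ≤ ((n : ℝ) * τ ^ p) ^ (1 / p) / 2 → N x = c → N y = c) :
    sInf ((fun y => ‖y - α‖) ''
        {y | IsGridPoint τ α y ∧ N y = c ∧ ∀ i ∉ S, y i = α i}) ≤
      sInf ((fun x => ‖x - α‖) ''
        {x | (‖x - α‖ ≤ d ∧ N x = c) ∧ ∀ i ∉ S, x i = α i}) +
        ((n : ℝ) * τ ^ p) ^ (1 / p) / 2 :=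
  feature_restricted_fmsr_le_msr_add_half_delta_general n p N α c d S τ hτ hadv haggr
end
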